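/- Let X be a radical object of C₂(P). The natural projection End_{C₂(P)}(X) → End_{K₂(P)}(X) restricts to a surjective group homomorphism p : Aut_{C₂(P)}(X) → Aut_{K₂(P)}(X) whose kernel is {1_X + f | f ∈ Htp(X,X)}; in particular the kernel is in bijection with the ℂ-vector space Htp(X,X) via f ↦ 1_X + f. -/

import Mathlib

open CategoryTheory

universe u

noncomputable section

variable (R : Type u) [Ring R]

structure TwoCx : Type (u + 1) where
  X1 : ModuleCat.{u} R
  X0 : ModuleCat.{u} R
  fin1 : Module.Finite R X1
  proj1 : Module.Projective R X1
  fin0 : Module.Finite R X0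
  proj0 : Module.Projective R X0
  d1 : X1 ⟶ X0
  d0 : X0 ⟶ X1
  dd1 : d1 ≫ d0 = 0
  dd0 : d0 ≫ d1 = 0

variable {R}

@[ext]
structure TwoHom (X Y : TwoCx R) : Type u where
  f1 : X.X1 ⟶ Y.X1
  f0 : X.X0 ⟶ Y.X0
  comm1 : X.d1 ≫ f0 = f1 ≫ Y.d1
  comm0 : X.d0 ≫ f1 = f0 ≫ Y.d0

instance : CategoryStruct (TwoCx R) where
  Hom := TwoHom
  id X := ⟨𝟙 X.X1, 𝟙 X.X0, by simp, by simp⟩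
  comp {X Y Z} f g :=
    ⟨f.f1 ≫ g.f1, f.f0 ≫ g.f0, by
      rw [← Category.assoc, f.comm1, Category.assoc, g.comm1, ← Category.assoc], by
      rw [← Category.assoc, f.comm0, Category.assoc, g.comm0, ← Category.assoc]⟩

@[simp] theorem id_f1 (X : TwoCx R) : TwoHom.f1 (𝟙 X) = 𝟙 X.X1 := rfl
@[simp] theorem id_f0 (X : TwoCx R) : TwoHom.f0 (𝟙 X) = 𝟙 X.X0 := rfl
@[simp] theorem comp_f1 {X Y Z : TwoCx R} (f : X ⟶ Y) (g : Y ⟶ Z) :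
    TwoHom.f1 (f ≫ g) = TwoHom.f1 f ≫ TwoHom.f1 g := rfl
@[simp] theorem comp_f0 {X Y Z : TwoCx R} (f : X ⟶ Y) (g : Y ⟶ Z) :
    TwoHom.f0 (f ≫ g) = TwoHom.f0 f ≫ TwoHom.f0 g := rfl

@[ext] theorem hom_ext {X Y : TwoCx R} {f g : X ⟶ Y}
    (h1 : TwoHom.f1 f = TwoHom.f1 g) (h0 : TwoHom.f0 f = TwoHom.f0 g) : f = g :=
  TwoHom.ext h1 h0

instance : Category (TwoCx R) where
  id_comp f := by ext <;> simp
  comp_id f := by ext <;> simp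
  assoc f g h := by ext <;> simp

section HomGroup

variable {X Y : TwoCx R}

instance : Zero (X ⟶ Y) :=
  ⟨TwoHom.mk 0 0 (by simp) (by simp)⟩

@[simp] theorem zero_f1 : TwoHom.f1 (0 : X ⟶ Y) = 0 := rfl
@[simp] theorem zero_f0 : TwoHom.f0 (0 : X ⟶ Y) = 0 := rfl

instance : Add (X ⟶ Y) :=
  ⟨fun f g => TwoHom.mk (f.f1 + g.f1) (f.f0 + g.f0)
    (by rw [Preadditive.comp_add, f.comm1, g.comm1, ← Preadditive.add_comp])
    (by rw [Preadditive.comp_add, f.comm0, g.comm0, ← Preadditive.add_comp])⟩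

@[simp] theorem add_f1 (f g : X ⟶ Y) :
    TwoHom.f1 (f + g) = TwoHom.f1 f + TwoHom.f1 g := rfl
@[simp] theorem add_f0 (f g : X ⟶ Y) :
    TwoHom.f0 (f + g) = TwoHom.f0 f + TwoHom.f0 g := rfl

instance : Neg (X ⟶ Y) :=
  ⟨fun f => TwoHom.mk (-f.f1) (-f.f0)
    (by rw [Preadditive.comp_neg, f.comm1, ← Preadditive.neg_comp])
    (by rw [Preadditive.comp_neg, f.comm0, ← Preadditive.neg_comp])⟩

@[simp] theorem neg_f1 (f : X ⟶ Y) : TwoHom.f1 (-f) = -TwoHom.f1 f := rfl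
@[simp] theorem neg_f0 (f : X ⟶ Y) : TwoHom.f0 (-f) = -TwoHom.f0 f := rfl

instance : AddCommGroup (X ⟶ Y) where
  add := (· + ·)
  zero := 0
  neg := Neg.neg
  add_assoc a b c := by ext <;> simp [add_assoc]
  zero_add a := by ext <;> simp
  add_zero a := by ext <;> simp
  add_comm a b := by ext <;> simp [add_comm]
  neg_add_cancel a := by ext <;> simp
  nsmul := nsmulRec
  zsmul := zsmulRec

@[simp] theorem sub_f1 (f g : X ⟶ Y) :
    TwoHom.f1 (f - g) = TwoHom.f1 f - TwoHom.f1 g := by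
  show TwoHom.f1 (f + -g) = _
  rw [add_f1, neg_f1, sub_eq_add_neg]

@[simp] theorem sub_f0 (f g : X ⟶ Y) :
    TwoHom.f0 (f - g) = TwoHom.f0 f - TwoHom.f0 g := by
  show TwoHom.f0 (f + -g) = _
  rw [add_f0, neg_f0, sub_eq_add_neg]

end HomGroup

instance : Preadditive (TwoCx R) where
  add_comp := by intros; ext <;> simp
  comp_add := by intros; ext <;> simp

def Homotopic {X Y : TwoCx R} (f g : X ⟶ Y) : Prop :=
  ∃ (h1 : X.X1 ⟶ Y.X0) (h0 : X.X0 ⟶ Y.X1),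
    TwoHom.f1 f - TwoHom.f1 g = h1 ≫ Y.d0 + X.d1 ≫ h0 ∧
    TwoHom.f0 f - TwoHom.f0 g = h0 ≫ Y.d1 + X.d0 ≫ h1

def Contractible (X : TwoCx R) : Prop := Homotopic (𝟙 X) (0 : X ⟶ X)

def IsHtpEquiv {X Y : TwoCx R} (f : X ⟶ Y) : Prop :=
  ∃ g : Y ⟶ X, Homotopic (f ≫ g) (𝟙 X) ∧ Homotopic (g ≫ f) (𝟙 Y)

def HtpEquiv (X Y : TwoCx R) : Prop := ∃ f : X ⟶ Y, IsHtpEquiv f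

def modRad (M : ModuleCat.{u} R) : Submodule R M :=
  sInf {N : Submodule R M | IsCoatom N}

def RadicalCx (X : TwoCx R) : Prop :=
  LinearMap.range X.d1.hom ≤ modRad X.X0 ∧ LinearMap.range X.d0.hom ≤ modRad X.X1

def dsum (X Y : TwoCx R) : TwoCx R where
  X1 := ModuleCat.of R (X.X1 × Y.X1)
  X0 := ModuleCat.of R (X.X0 × Y.X0)
  fin1 := by haveI := X.fin1; haveI := Y.fin1; exact (inferInstance : Module.Finite R (X.X1 × Y.X1))
  proj1 := by haveI := X.proj1; haveI := Y.proj1; exact (inferInstance : Module.Projective R (X.X1 × Y.X1))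
  fin0 := by haveI := X.fin0; haveI := Y.fin0; exact (inferInstance : Module.Finite R (X.X0 × Y.X0))
  proj0 := by haveI := X.proj0; haveI := Y.proj0; exact (inferInstance : Module.Projective R (X.X0 × Y.X0))
  d1 := ModuleCat.ofHom (LinearMap.prodMap X.d1.hom Y.d1.hom)
  d0 := ModuleCat.ofHom (LinearMap.prodMap X.d0.hom Y.d0.hom)
  dd1 := by
    have h1 : LinearMap.comp X.d0.hom X.d1.hom = 0 := congrArg ModuleCat.Hom.hom X.dd1
    have h2 : LinearMap.comp Y.d0.hom Y.d1.hom = 0 := congrArg ModuleCat.Hom.hom Y.dd1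
    apply ModuleCat.hom_ext
    show LinearMap.comp (LinearMap.prodMap X.d0.hom Y.d0.hom) (LinearMap.prodMap X.d1.hom Y.d1.hom) = 0
    rw [LinearMap.prodMap_comp, h1, h2, LinearMap.prodMap_zero]
  dd0 := by
    have h1 : LinearMap.comp X.d1.hom X.d0.hom = 0 := congrArg ModuleCat.Hom.hom X.dd0
    have h2 : LinearMap.comp Y.d1.hom Y.d0.hom = 0 := congrArg ModuleCat.Hom.hom Y.dd0
    apply ModuleCat.hom_ext
    show LinearMap.comp (LinearMap.prodMap X.d1.hom Y.d1.hom) (LinearMap.prodMap X.d0.hom Y.d0.hom) = 0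
    rw [LinearMap.prodMap_comp, h1, h2, LinearMap.prodMap_zero]

def kP (P : ModuleCat.{u} R) (h1 : Module.Finite R P) (h2 : Module.Projective R P) : TwoCx R :=
  ⟨P, P, h1, h2, h1, h2, 𝟙 P, 0, by simp, by simp⟩

def kS (P : ModuleCat.{u} R) (h1 : Module.Finite R P) (h2 : Module.Projective R P) : TwoCx R :=
  ⟨P, P, h1, h2, h1, h2, 0, 𝟙 P, by simp, by simp⟩

def starCx (X : TwoCx R) : TwoCx R :=
  ⟨X.X0, X.X1, X.fin0, X.proj0, X.fin1, X.proj1, -X.d0, -X.d1,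
    by simp [X.dd0], by simp [X.dd1]⟩

-- ## The homotopy category
variable (R) in
def htpRel : HomRel (TwoCx R) := fun _ _ f g => Homotopic f g

abbrev KTwo (R : Type u) [Ring R] := CategoryTheory.Quotient (htpRel R)

def KFun (R : Type u) [Ring R] : TwoCx R ⥤ KTwo R := Quotient.functor _

-- ## Short exact sequences
structure SESData (Y Z X : TwoCx R) where
  a : Y ⟶ Z
  b : Z ⟶ X
  inj1 : Function.Injective (TwoHom.f1 a)
  inj0 : Function.Injective (TwoHom.f0 a)
  surj1 : Function.Surjective (TwoHom.f1 b)
  surj0 : Function.Surjective (TwoHom.f0 b)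
  exact1 : LinearMap.range (TwoHom.f1 a).hom = LinearMap.ker (TwoHom.f1 b).hom
  exact0 : LinearMap.range (TwoHom.f0 a).hom = LinearMap.ker (TwoHom.f0 b).hom

def SESEquiv {Y X Z Z' : TwoCx R} (s : SESData Y Z X) (t : SESData Y Z' X) : Prop :=
  ∃ e : Z ≅ Z', s.a ≫ e.hom = t.a ∧ e.hom ≫ t.b = s.b

/-- The two components of a morphism `X ⟶ Y^*`, with their natural types. -/
def sf1 {X Y : TwoCx R} (f : X ⟶ starCx Y) : X.X1 →ₗ[R] Y.X0 := (TwoHom.f1 f).hom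
def sf0 {X Y : TwoCx R} (f : X ⟶ starCx Y) : X.X0 →ₗ[R] Y.X1 := (TwoHom.f0 f).hom

-- ## The middle term associated to `f : X ⟶ Y^*`
def coneCx {X Y : TwoCx R} (f : X ⟶ starCx Y) : TwoCx R where
  X1 := ModuleCat.of R (X.X1 × Y.X1)
  X0 := ModuleCat.of R (X.X0 × Y.X0)
  fin1 := by haveI := X.fin1; haveI := Y.fin1; exact (inferInstance : Module.Finite R (X.X1 × Y.X1))
  proj1 := by haveI := X.proj1; haveI := Y.proj1; exact (inferInstance : Module.Projective R (X.X1 × Y.X1))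
  fin0 := by haveI := X.fin0; haveI := Y.fin0; exact (inferInstance : Module.Finite R (X.X0 × Y.X0))
  proj0 := by haveI := X.proj0; haveI := Y.proj0; exact (inferInstance : Module.Projective R (X.X0 × Y.X0))
  d1 := ModuleCat.ofHom (LinearMap.prod (X.d1.hom ∘ₗ LinearMap.fst R X.X1 Y.X1)
    (Y.d1.hom ∘ₗ LinearMap.snd R X.X1 Y.X1 - sf1 f ∘ₗ LinearMap.fst R X.X1 Y.X1))
  d0 := ModuleCat.ofHom (LinearMap.prod (X.d0.hom ∘ₗ LinearMap.fst R X.X0 Y.X0)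
    (Y.d0.hom ∘ₗ LinearMap.snd R X.X0 Y.X0 - sf0 f ∘ₗ LinearMap.fst R X.X0 Y.X0))
  dd1 := by
    refine ModuleCat.hom_ext (LinearMap.ext fun p => Prod.ext ?_ ?_)
    · show X.d0.hom (X.d1.hom p.1) = 0
      exact LinearMap.congr_fun (congrArg ModuleCat.Hom.hom X.dd1) p.1
    · show Y.d0.hom (Y.d1.hom p.2 - sf1 f p.1) - sf0 f (X.d1.hom p.1) = 0
      have hY : Y.d0.hom (Y.d1.hom p.2) = 0 := LinearMap.congr_fun (congrArg ModuleCat.Hom.hom Y.dd1) p.2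
      have hc : sf0 f (X.d1.hom p.1) = -(Y.d0.hom (sf1 f p.1)) :=
        LinearMap.congr_fun (congrArg ModuleCat.Hom.hom f.comm1) p.1
      rw [map_sub, hY, hc]
      simp
  dd0 := by
    refine ModuleCat.hom_ext (LinearMap.ext fun p => Prod.ext ?_ ?_)
    · show X.d1.hom (X.d0.hom p.1) = 0
      exact LinearMap.congr_fun (congrArg ModuleCat.Hom.hom X.dd0) p.1
    · show Y.d1.hom (Y.d0.hom p.2 - sf0 f p.1) - sf1 f (X.d0.hom p.1) = 0
      have hY : Y.d1.hom (Y.d0.hom p.2) = 0 := LinearMap.congr_fun (congrArg ModuleCat.Hom.hom Y.dd0) p.2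
      have hc : sf1 f (X.d0.hom p.1) = -(Y.d1.hom (sf0 f p.1)) :=
        LinearMap.congr_fun (congrArg ModuleCat.Hom.hom f.comm0) p.1
      rw [map_sub, hY, hc]
      simp

/-- The canonical inclusion `Y ⟶ Z_f`. -/
def coneIn {X Y : TwoCx R} (f : X ⟶ starCx Y) : Y ⟶ coneCx f where
  f1 := ModuleCat.ofHom (LinearMap.inr R X.X1 Y.X1)
  f0 := ModuleCat.ofHom (LinearMap.inr R X.X0 Y.X0)
  comm1 := by
    refine ModuleCat.hom_ext (LinearMap.ext fun y => Prod.ext ?_ ?_)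
    · show (0 : X.X0) = X.d1.hom 0
      simp
    · show Y.d1.hom y = Y.d1.hom y - sf1 f 0
      simp
  comm0 := by
    refine ModuleCat.hom_ext (LinearMap.ext fun y => Prod.ext ?_ ?_)
    · show (0 : X.X1) = X.d0.hom 0
      simp
    · show Y.d0.hom y = Y.d0.hom y - sf0 f 0
      simp

/-- The canonical projection `Z_f ⟶ X`. -/
def coneOut {X Y : TwoCx R} (f : X ⟶ starCx Y) : coneCx f ⟶ X where
  f1 := ModuleCat.ofHom (LinearMap.fst R X.X1 Y.X1)
  f0 := ModuleCat.ofHom (LinearMap.fst R X.X0 Y.X0)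
  comm1 := ModuleCat.hom_ext (LinearMap.ext fun _ => rfl)
  comm0 := ModuleCat.hom_ext (LinearMap.ext fun _ => rfl)

/-- The canonical short exact sequence `0 ⟶ Y ⟶ Z_f ⟶ X ⟶ 0`. -/
def canonSES {X Y : TwoCx R} (f : X ⟶ starCx Y) : SESData Y (coneCx f) X where
  a := coneIn f
  b := coneOut f
  inj1 := LinearMap.inr_injective (R := R) (M := X.X1) (M₂ := Y.X1)
  inj0 := LinearMap.inr_injective (R := R) (M := X.X0) (M₂ := Y.X0)
  surj1 := LinearMap.fst_surjective (R := R) (M := X.X1) (M₂ := Y.X1)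
  surj0 := LinearMap.fst_surjective (R := R) (M := X.X0) (M₂ := Y.X0)
  exact1 := LinearMap.range_inr R X.X1 Y.X1
  exact0 := LinearMap.range_inr R X.X0 Y.X0

-- ## scalar endomorphisms
def scalarMod [Algebra ℂ R] (c : ℂ) (M : ModuleCat.{u} R) : M ⟶ M :=
  ModuleCat.ofHom
  ({ toFun := fun m => algebraMap ℂ R c • m
     map_add' := fun x y => smul_add _ x y
     map_smul' := fun r m => by
       simp only [RingHom.id_apply, smul_smul, Algebra.commutes] } : M →ₗ[R] M)

def scalarHom [Algebra ℂ R] (c : ℂ) (X : TwoCx R) : X ⟶ X where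
  f1 := scalarMod c X.X1
  f0 := scalarMod c X.X0
  comm1 := by
    refine ModuleCat.hom_ext (LinearMap.ext fun x => ?_)
    exact (map_smul X.d1.hom (algebraMap ℂ R c) x).symm
  comm0 := by
    refine ModuleCat.hom_ext (LinearMap.ext fun x => ?_)
    exact (map_smul X.d0.hom (algebraMap ℂ R c) x).symm

end


/-!
A nullhomotopic endomorphism `f = h d + d h` of a radical complex has components with image in
the radical, so by Nakayama each component of `1 + f` is surjective, and hence bijective since
finitely generated modules over a finite-dimensional algebra are Noetherian. Thus every
endomorphism homotopic to `1_X` is an automorphism. Lifting an automorphism `σ` of `X` in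
`K₂(P)` and its inverse to `f, g` in `C₂(P)`, both `f g` and `g f` are homotopic to `1_X`,
hence invertible, which forces `f` itself to be invertible.
-/

namespace Module

variable {R M : Type*} [Ring R] [AddCommGroup M] [Module R M]

theorem eq_top_of_sup_jacobson_eq_top [IsCoatomic (Submodule R M)] {N : Submodule R M}
    (h : N ⊔ jacobson R M = ⊤) : N = ⊤ := by
  by_contra hN
  obtain ⟨c, hc, hNc⟩ := (eq_top_or_exists_le_coatom N).resolve_left hN
  have hjc : jacobson R M ≤ c := sInf_le hc
  exact hc.1 (top_le_iff.1 (h ▸ sup_le hNc hjc))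

theorem bijective_id_add_of_range_le_jacobson [IsNoetherian R M] (g : M →ₗ[R] M)
    (hg : LinearMap.range g ≤ jacobson R M) :
    Function.Bijective (LinearMap.id + g : M →ₗ[R] M) := by
  refine IsNoetherian.bijective_of_surjective_endomorphism _ ?_
  rw [← LinearMap.range_eq_top]
  refine eq_top_of_sup_jacobson_eq_top (eq_top_iff.2 fun x _ => ?_)
  have hx : (LinearMap.id + g : M →ₗ[R] M) x - g x = x := by simp
  exact hx ▸ Submodule.sub_mem _ (Submodule.mem_sup_left ⟨x, rfl⟩)
    (Submodule.mem_sup_right (hg ⟨x, rfl⟩))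

variable {N P Q : Type*} [AddCommGroup N] [Module R N] [AddCommGroup P] [Module R P]
  [AddCommGroup Q] [Module R Q]

theorem range_comp_add_comp_le_jacobson (h : M →ₗ[R] N) (d : N →ₗ[R] P) (d' : M →ₗ[R] Q)
    (k : Q →ₗ[R] P) (hd : LinearMap.range d ≤ jacobson R P)
    (hd' : LinearMap.range d' ≤ jacobson R Q) :
    LinearMap.range (d ∘ₗ h + k ∘ₗ d') ≤ jacobson R P := by
  refine (LinearMap.range_add_le _ _).trans (sup_le ?_ ?_)
  · exact (LinearMap.range_comp_le_range h d).trans hd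
  · rw [LinearMap.range_comp]
    exact (Submodule.map_mono hd').trans (map_jacobson_le k)

end Module

theorem modRad_eq_jacobson {R : Type u} [Ring R] (M : ModuleCat.{u} R) :
    modRad M = Module.jacobson R M := rfl

section

variable {R : Type u} [Ring R] {X Y Z : TwoCx R}

theorem homotopic_iff_sub_homotopic_zero (f g : X ⟶ Y) :
    Homotopic f g ↔ Homotopic (f - g) 0 := by
  simp only [Homotopic, sub_f1, sub_f0, zero_f1, zero_f0, sub_zero]

theorem Homotopic.refl (f : X ⟶ Y) : Homotopic f f :=
  ⟨0, 0, by simp, by simp⟩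

theorem Homotopic.symm {f g : X ⟶ Y} : Homotopic f g → Homotopic g f := by
  rintro ⟨h1, h0, e1, e0⟩
  refine ⟨-h1, -h0, ?_, ?_⟩
  · rw [← neg_sub, e1]; simp only [Preadditive.neg_comp, Preadditive.comp_neg]; abel
  · rw [← neg_sub, e0]; simp only [Preadditive.neg_comp, Preadditive.comp_neg]; abel

theorem Homotopic.trans {f g k : X ⟶ Y} :
    Homotopic f g → Homotopic g k → Homotopic f k := by
  rintro ⟨h1, h0, e1, e0⟩ ⟨h1', h0', e1', e0'⟩
  refine ⟨h1 + h1', h0 + h0', ?_, ?_⟩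
  · rw [← sub_add_sub_cancel _ (TwoHom.f1 g), e1, e1']
    simp only [Preadditive.add_comp, Preadditive.comp_add]
    abel
  · rw [← sub_add_sub_cancel _ (TwoHom.f0 g), e0, e0']
    simp only [Preadditive.add_comp, Preadditive.comp_add]
    abel

theorem Homotopic.comp_left (f : X ⟶ Y) {g g' : Y ⟶ Z} :
    Homotopic g g' → Homotopic (f ≫ g) (f ≫ g') := by
  rintro ⟨h1, h0, e1, e0⟩
  refine ⟨TwoHom.f1 f ≫ h1, TwoHom.f0 f ≫ h0, ?_, ?_⟩
  · rw [comp_f1, comp_f1, ← Preadditive.comp_sub, e1]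
    simp only [Preadditive.comp_add, ← Category.assoc, f.comm1]
  · rw [comp_f0, comp_f0, ← Preadditive.comp_sub, e0]
    simp only [Preadditive.comp_add, ← Category.assoc, f.comm0]

theorem Homotopic.comp_right {f f' : X ⟶ Y} (g : Y ⟶ Z) :
    Homotopic f f' → Homotopic (f ≫ g) (f' ≫ g) := by
  rintro ⟨h1, h0, e1, e0⟩
  refine ⟨h1 ≫ TwoHom.f0 g, h0 ≫ TwoHom.f1 g, ?_, ?_⟩
  · rw [comp_f1, comp_f1, ← Preadditive.sub_comp, e1]
    simp only [Preadditive.add_comp, Category.assoc, g.comm0]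
  · rw [comp_f0, comp_f0, ← Preadditive.sub_comp, e0]
    simp only [Preadditive.add_comp, Category.assoc, g.comm1]

theorem Homotopic.range_le_jacobson_of_radical (hX : RadicalCx X) {f : X ⟶ X}
    (hf : Homotopic f 0) :
    LinearMap.range (TwoHom.f1 f).hom ≤ Module.jacobson R X.X1 ∧
    LinearMap.range (TwoHom.f0 f).hom ≤ Module.jacobson R X.X0 := by
  obtain ⟨h1, h0, e1, e0⟩ := hf
  rw [zero_f1, sub_zero] at e1
  rw [zero_f0, sub_zero] at e0
  obtain ⟨hd1, hd0⟩ := hX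
  rw [modRad_eq_jacobson] at hd1 hd0
  exact ⟨e1 ▸ Module.range_comp_add_comp_le_jacobson h1.hom _ _ h0.hom hd0 hd1,
    e0 ▸ Module.range_comp_add_comp_le_jacobson h0.hom _ _ h1.hom hd1 hd0⟩

end

namespace TwoCx

variable {R : Type u} [Ring R] {X Y : TwoCx R}

theorem isIso_of_isIso_f1_f0 (u : X ⟶ Y) [IsIso (TwoHom.f1 u)] [IsIso (TwoHom.f0 u)] :
    IsIso u := by
  let v : Y ⟶ X :=
    { f1 := inv (TwoHom.f1 u)
      f0 := inv (TwoHom.f0 u)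
      comm1 := by rw [IsIso.comp_inv_eq, Category.assoc, u.comm1, IsIso.inv_hom_id_assoc]
      comm0 := by rw [IsIso.comp_inv_eq, Category.assoc, u.comm0, IsIso.inv_hom_id_assoc] }
  exact ⟨v, by ext <;> simp [v], by ext <;> simp [v]⟩

theorem isIso_id_add_of_homotopic_zero [IsNoetherianRing R] (hX : RadicalCx X) {f : X ⟶ X}
    (hf : Homotopic f 0) : IsIso (𝟙 X + f) := by
  have := X.fin1
  have := X.fin0
  obtain ⟨hr1, hr0⟩ := hf.range_le_jacobson_of_radical hX
  have : IsIso (TwoHom.f1 (𝟙 X + f)) := (ConcreteCategory.isIso_iff_bijective _).2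
    (Module.bijective_id_add_of_range_le_jacobson _ hr1)
  have : IsIso (TwoHom.f0 (𝟙 X + f)) := (ConcreteCategory.isIso_iff_bijective _).2
    (Module.bijective_id_add_of_range_le_jacobson _ hr0)
  exact isIso_of_isIso_f1_f0 _

theorem isIso_of_homotopic_id [IsNoetherianRing R] (hX : RadicalCx X) {u : X ⟶ X}
    (hu : Homotopic u (𝟙 X)) : IsIso u := by
  simpa using isIso_id_add_of_homotopic_zero hX ((homotopic_iff_sub_homotopic_zero _ _).1 hu)

end TwoCx

instance htpRel_congruence {R : Type u} [Ring R] : Congruence (htpRel R) where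
  equivalence := ⟨Homotopic.refl, Homotopic.symm, Homotopic.trans⟩
  comp_left := Homotopic.comp_left
  comp_right := Homotopic.comp_right

instance KFun_full {R : Type u} [Ring R] : (KFun R).Full :=
  Quotient.full_functor _

theorem KFun_map_eq_iff {R : Type u} [Ring R] {X Y : TwoCx R} (f g : X ⟶ Y) :
    (KFun R).map f = (KFun R).map g ↔ Homotopic f g :=
  Quotient.functor_map_eq_iff (htpRel R) f g

theorem CategoryTheory.Functor.mapAut_surjective_of_isIso {C D : Type*} [Category* C]
    [Category* D] (F : C ⥤ D) [F.Full] {X : C}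
    (h : ∀ u : X ⟶ X, F.map u = F.map (𝟙 X) → IsIso u) : Function.Surjective (F.mapAut X) := by
  intro σ
  obtain ⟨f, hf⟩ := F.map_surjective σ.hom
  obtain ⟨g, hg⟩ := F.map_surjective σ.inv
  have : IsIso (f ≫ g) := h _ (by simpa [hf, hg] using σ.hom_inv_id)
  have : IsIso (g ≫ f) := h _ (by simpa [hf, hg] using σ.inv_hom_id)
  have : Mono f := mono_of_mono f g
  have : IsSplitEpi f := IsSplitEpi.mk' ⟨CategoryTheory.inv (g ≫ f) ≫ g, by simp⟩
  have : IsIso f := isIso_of_mono_of_isSplitEpi f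
  exact ⟨asIso f, Iso.ext hf⟩

/-- For a radical object `X` of `C₂(P)`, the natural projection
`End_{C₂(P)}(X) → End_{K₂(P)}(X)` restricts to a surjective group homomorphism
`Aut_{C₂(P)}(X) → Aut_{K₂(P)}(X)` whose kernel is `{1_X + f | f ∈ Htp(X,X)}`; in particular
`f ↦ 1_X + f` is a bijection from `Htp(X,X)` onto the kernel. -/
theorem statement_3 {A : Type u} [Ring A] [Algebra ℂ A] [FiniteDimensional ℂ A]
    (X : TwoCx Aᵐᵒᵖ) (hX : RadicalCx X) :
    Function.Surjective ((KFun Aᵐᵒᵖ).mapAut X) ∧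
    Set.BijOn (fun f : X ⟶ X => 𝟙 X + f)
      {f : X ⟶ X | Homotopic f 0}
      {u : X ⟶ X | IsIso u ∧ (KFun Aᵐᵒᵖ).map u = (KFun Aᵐᵒᵖ).map (𝟙 X)} := by
  have : IsNoetherianRing Aᵐᵒᵖ := isNoetherian_of_tower ℂ inferInstance
  have hiso (u : X ⟶ X) (hu : Homotopic u (𝟙 X)) : IsIso u := TwoCx.isIso_of_homotopic_id hX hu
  refine ⟨(KFun Aᵐᵒᵖ).mapAut_surjective_of_isIso fun u hu => hiso u ((KFun_map_eq_iff _ _).1 hu),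
    fun f hf => ?_, fun f _ g _ hfg => add_left_cancel hfg, fun u ⟨_, hu⟩ => ?_⟩
  · have h : Homotopic (𝟙 X + f) (𝟙 X) := by
      rwa [homotopic_iff_sub_homotopic_zero, add_sub_cancel_left]
    exact ⟨hiso _ h, (KFun_map_eq_iff _ _).2 h⟩
  · refine ⟨u - 𝟙 X, ?_, add_sub_cancel _ _⟩
    exact (homotopic_iff_sub_homotopic_zero _ _).1 ((KFun_map_eq_iff _ _).1 hu)
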